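/- Let λ ∈ ℂ, let (a(n)) be a sequence of complex numbers with a(n) = O(n^c) for some c > 0, and define f(z) = Σ_{n=1}^∞ a(n) n^λ e^{2πinz} for Im(z) > 0. If f extends to an entire function on ℂ, then a(n) n^λ = O(r^n) for every 0 < r < 1, hence a(n) = O(n^{-A}) for every A > 0. -/

import Mathlib

/-!
With `q = e^{2πiz}`, the hypothesis says `g z = ∑ bₙ qⁿ` on the upper half-plane, where
`bₙ = a(n) n^λ` and `b₀ = 0`. Since `g` is entire and agrees with its translate by `1` on the
upper half-plane, it is `1`-periodic, so `g = G ∘ q` for a function `G` holomorphic on `ℂ \ {0}`;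
the `q`-series shows `g` is bounded as `Im z → ∞`, so `G` extends holomorphically across `0`.
Thus `G` is entire with Taylor series `∑ bₙ qⁿ`, whose radius of convergence is therefore
infinite, i.e. `bₙ = O(rⁿ)` for every `r > 0`. Dividing by `n^λ` costs only a polynomial factor.
-/

open Complex Filter Function Periodic
open UpperHalfPlane hiding I
open scoped Topology Real ENNReal

local notation "I∞" => comap Complex.im atTop
local notation "𝕢" => qParam

namespace Function.Periodic

theorem periodic_qParam {h : ℝ} (hh : h ≠ 0) : Periodic (𝕢 h) h := fun z => by
  rw [qParam, qParam, ← exp_periodic (2 * π * I * z / h)]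
  have hh' : (h : ℂ) ≠ 0 := ofReal_ne_zero.mpr hh
  congr 1
  field_simp

theorem qParam_one_pow (z : ℂ) (n : ℕ) : 𝕢 1 z ^ n = exp (2 * π * I * n * z) := by
  rw [qParam, ← exp_nat_mul]
  congr 1
  push_cast
  ring

theorem cuspFunction_eventuallyEq {h : ℝ} (hh : 0 < h) {f₁ f₂ : ℂ → ℂ} (hf : f₁ =ᶠ[I∞] f₂) :
    cuspFunction h f₁ =ᶠ[𝓝 0] cuspFunction h f₂ := by
  have hinv : f₁ ∘ invQParam h =ᶠ[𝓝[≠] 0] f₂ ∘ invQParam h := (invQParam_tendsto hh).eventually hf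
  refine eventuallyEq_nhds_of_eventuallyEq_nhdsNE ?_ ?_
  · filter_upwards [hinv, self_mem_nhdsWithin] with q hq hq0
    simpa only [cuspFunction_eq_of_nonzero _ _ hq0, comp_apply] using hq
  · simp only [cuspFunction, update_self, limUnder, map_congr hinv]

theorem differentiable_cuspFunction {h : ℝ} (hh : 0 < h) {f : ℂ → ℂ} (hf : Differentiable ℂ f)
    (hper : Periodic f h) (hbdd : BoundedAtFilter I∞ f) : Differentiable ℂ (cuspFunction h f) := by
  intro q
  rcases eq_or_ne q 0 with rfl | hq
  · exact differentiableAt_cuspFunction_zero hh hper (.of_forall hf) hbdd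
  · rw [← qParam_right_inv hh.ne' hq]
    exact differentiableAt_cuspFunction hh.ne' hper (hf _)

end Function.Periodic

theorem Differentiable.periodic_of_eventuallyEq {f : ℂ → ℂ} (hf : Differentiable ℂ f) {c z₀ : ℂ}
    (hper : ∀ᶠ z in 𝓝 z₀, f (z + c) = f z) : Periodic f c :=
  congrFun <| AnalyticOnNhd.eq_of_eventuallyEq
    (fun z _ => (hf.comp (differentiable_id.add_const c)).analyticAt z)
    (fun z _ => hf.analyticAt z) hper

theorem HasFPowerSeriesAt.radius_eq_top_of_differentiable {E : Type*} [NormedAddCommGroup E]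
    [NormedSpace ℂ E] [CompleteSpace E] {f : ℂ → E} {p : FormalMultilinearSeries ℂ ℂ E} {z : ℂ}
    (hp : HasFPowerSeriesAt f p z) (hf : Differentiable ℂ f) : p.radius = ∞ := by
  have hcauchy := hf.hasFPowerSeriesOnBall z one_pos
  rw [hp.eq_formalMultilinearSeries hcauchy.hasFPowerSeriesAt]
  exact top_unique hcauchy.r_le

theorem FormalMultilinearSeries.exists_norm_le_mul_pow_of_radius_eq_top {𝕜 E F : Type*}
    [NontriviallyNormedField 𝕜] [NormedAddCommGroup E] [NormedSpace 𝕜 E] [NormedAddCommGroup F]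
    [NormedSpace 𝕜 F] {p : FormalMultilinearSeries 𝕜 E F} (hp : p.radius = ∞) {r : ℝ}
    (hr : 0 < r) : ∃ C, ∀ n, ‖p n‖ ≤ C * r ^ n := by
  obtain ⟨C, -, hC⟩ := p.norm_mul_pow_le_of_lt_radius (r := ⟨r⁻¹, inv_nonneg.mpr hr.le⟩)
    (hp ▸ ENNReal.coe_lt_top)
  refine ⟨C, fun n => ?_⟩
  calc ‖p n‖ = ‖p n‖ * r⁻¹ ^ n * r ^ n := by
        rw [mul_assoc, ← mul_pow, inv_mul_cancel₀ hr.ne', one_pow, mul_one]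
    _ ≤ C * r ^ n := by gcongr; exact hC n

theorem radius_ofScalars_eq_top_of_hasSum_qParam {h : ℝ} (hh : 0 < h) {g : ℂ → ℂ}
    {c : ℕ → ℂ} (hg : Differentiable ℂ g)
    (hsum : ∀ z, 0 < z.im → HasSum (fun n => c n * 𝕢 h z ^ n) (g z)) :
    (FormalMultilinearSeries.ofScalars ℂ c).radius = ∞ := by
  set f : ℍ → ℂ := fun τ => g τ
  have hf : ∀ τ : ℍ, HasSum (fun n => c n • 𝕢 h τ ^ n) (f τ) := fun τ => hsum τ τ.im_pos
  have hfg : f ∘ ofComplex =ᶠ[I∞] g := by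
    filter_upwards [preimage_mem_comap (Ioi_mem_atTop 0)] with z hz
    simp [f, ofComplex_apply_of_im_pos hz]
  have hper : Periodic g h := hg.periodic_of_eventuallyEq (z₀ := I) <| by
    filter_upwards [continuous_im.continuousAt.eventually (lt_mem_nhds (by simp : 0 < I.im))]
      with z hz
    refine (hsum (z + h) (by simpa using hz)).unique ?_
    simpa only [periodic_qParam hh.ne' z] using hsum z hz
  have hbdd : BoundedAtFilter I∞ g :=
    ((isBoundedAtImInfty_of_hasSum_qExpansion hh hf).comp_tendsto
      tendsto_comap_im_ofComplex).congr' hfg EventuallyEq.rfl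
  have hG := differentiable_cuspFunction hh hg hper hbdd
  -- The `q`-expansion API is stated on `ℍ`; the cusp functions of `f` and `g` agree near `0`.
  have hFG : UpperHalfPlane.cuspFunction h f =ᶠ[𝓝 0] cuspFunction h g :=
    cuspFunction_eventuallyEq hh hfg
  exact ((hasFPowerSeriesOnBall_cuspFunction hh ((hG.analyticAt 0).congr hFG.symm)
    hf).hasFPowerSeriesAt.congr hFG).radius_eq_top_of_differentiable hG

theorem exists_rpow_mul_pow_le (s : ℝ) {r : ℝ} (hr0 : 0 ≤ r) (hr1 : r < 1) :
    ∃ M, ∀ n : ℕ, 1 ≤ n → (n : ℝ) ^ s * r ^ n ≤ M := by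
  obtain ⟨M, hM⟩ := (tendsto_pow_const_mul_const_pow_of_lt_one ⌈s⌉₊ hr0 hr1).bddAbove_range
  refine ⟨M, fun n hn => le_trans ?_ (hM ⟨n, rfl⟩)⟩
  dsimp only
  rw [← Real.rpow_natCast (n : ℝ) ⌈s⌉₊]
  gcongr
  · exact_mod_cast hn
  · exact Nat.le_ceil s

theorem exists_norm_le_mul_rpow_neg_of_norm_mul_cpow_le {a : ℕ → ℂ} {lam : ℂ} {C r : ℝ}
    (hr0 : 0 < r) (hr1 : r < 1) (ha : ∀ n, 1 ≤ n → ‖a n * (n : ℂ) ^ lam‖ ≤ C * r ^ n) (A : ℝ) :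
    ∃ C', ∀ n, 1 ≤ n → ‖a n‖ ≤ C' * (n : ℝ) ^ (-A) := by
  obtain ⟨M, hM⟩ := exists_rpow_mul_pow_le (A - lam.re) hr0.le hr1
  have hC : 0 ≤ C :=
    nonneg_of_mul_nonneg_left (by simpa using (norm_nonneg _).trans (ha 1 le_rfl)) hr0
  refine ⟨C * M, fun n hn => ?_⟩
  have hn0 : (0 : ℝ) < n := by exact_mod_cast hn
  calc ‖a n‖ = ‖a n * (n : ℂ) ^ lam‖ * (n : ℝ) ^ (-lam.re) := by
        rw [norm_mul, norm_natCast_cpow_of_pos hn, mul_assoc, ← Real.rpow_add hn0, add_neg_cancel,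
          Real.rpow_zero, mul_one]
    _ ≤ C * r ^ n * (n : ℝ) ^ (-lam.re) := by gcongr; exact ha n hn
    _ = C * ((n : ℝ) ^ (A - lam.re) * r ^ n) * (n : ℝ) ^ (-A) := by
        rw [show -lam.re = (A - lam.re) + -A by ring, Real.rpow_add hn0]; ring
    _ ≤ C * M * (n : ℝ) ^ (-A) := by gcongr; exact hM n hn

theorem stmt_12_general (lam : ℂ) (a : ℕ → ℂ)
    (hf : ∃ g : ℂ → ℂ, Differentiable ℂ g ∧
      ∀ z : ℂ, 0 < z.im →
        HasSum (fun n : ℕ => a (n + 1) * ((n + 1 : ℕ) : ℂ) ^ lam *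
          Complex.exp (2 * Real.pi * Complex.I * ((n + 1 : ℕ) : ℂ) * z)) (g z)) :
    (∀ r : ℝ, 0 < r → r < 1 →
      ∃ C : ℝ, ∀ n : ℕ, 1 ≤ n → ‖a n * (n : ℂ) ^ lam‖ ≤ C * r ^ n) ∧
    (∀ A : ℝ, 0 < A → ∃ C : ℝ, ∀ n : ℕ, 1 ≤ n → ‖a n‖ ≤ C * (n : ℝ) ^ (-A)) := by
  obtain ⟨g, hg, hsum⟩ := hf
  set b : ℕ → ℂ := fun n => if n = 0 then 0 else a n * (n : ℂ) ^ lam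
  have hb : ∀ z, 0 < z.im → HasSum (fun n => b n * 𝕢 1 z ^ n) (g z) := fun z hz => by
    rw [← hasSum_nat_add_iff' 1]
    simpa [b, qParam_one_pow] using hsum z hz
  have hdecay : ∀ r, 0 < r → ∃ C, ∀ n, 1 ≤ n → ‖a n * (n : ℂ) ^ lam‖ ≤ C * r ^ n := fun r hr => by
    obtain ⟨C, hC⟩ := FormalMultilinearSeries.exists_norm_le_mul_pow_of_radius_eq_top
      (radius_ofScalars_eq_top_of_hasSum_qParam one_pos hg hb) hr
    refine ⟨C, fun n hn => ?_⟩
    simpa [b, FormalMultilinearSeries.ofScalars_norm, Nat.one_le_iff_ne_zero.mp hn] using hC n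
  refine ⟨fun r hr _ => hdecay r hr, fun A _ => ?_⟩
  obtain ⟨C, hC⟩ := hdecay (1 / 2) one_half_pos
  exact exists_norm_le_mul_rpow_neg_of_norm_mul_cpow_le one_half_pos one_half_lt_one hC A

/-- Let `λ ∈ ℂ`, `(a(n))` with `a(n) = O(n^c)` for some `c > 0`, and
`f(z) = Σ_{n≥1} a(n) n^λ e^{2πinz}` on the upper half-plane. If `f` extends to
an entire function on `ℂ`, then `a(n) n^λ = O(rⁿ)` for every `0 < r < 1`,
hence `a(n) = O(n^{-A})` for every `A > 0`. -/
theorem stmt_12 (lam : ℂ) (a : ℕ → ℂ) (c : ℝ) (hc : 0 < c)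
    (ha : ∃ C : ℝ, ∀ n : ℕ, 1 ≤ n → ‖a n‖ ≤ C * (n : ℝ) ^ c)
    (hf : ∃ g : ℂ → ℂ, Differentiable ℂ g ∧
      ∀ z : ℂ, 0 < z.im →
        HasSum (fun n : ℕ => a (n + 1) * ((n + 1 : ℕ) : ℂ) ^ lam *
          Complex.exp (2 * Real.pi * Complex.I * ((n + 1 : ℕ) : ℂ) * z)) (g z)) :
    (∀ r : ℝ, 0 < r → r < 1 →
      ∃ C : ℝ, ∀ n : ℕ, 1 ≤ n → ‖a n * (n : ℂ) ^ lam‖ ≤ C * r ^ n) ∧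
    (∀ A : ℝ, 0 < A → ∃ C : ℝ, ∀ n : ℕ, 1 ≤ n → ‖a n‖ ≤ C * (n : ℝ) ^ (-A)) :=
  stmt_12_general lam a hf
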